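/- Let λ be a partition of n with at most two rows and m an integer with max{λ₁, λ₂+1} ≤ m ≤ n. For any two increasing gapless tableaux T₁, T₂ of shape λ with maximum entry m that are equivalent under the relation ∼_{λ;m}, the standard Young tableaux Φ_{λ;m}(T₁) and Φ_{λ;m}(T₂) have the same shape. -/

import Mathlib

/-- A two-row tableau, given by its two rows (lists of entries). -/
structure TwoRowT where
  r1 : List ℕ
  r2 : List ℕ
deriving DecidableEq

/-- A "hook-plus" tableau: two rows together with the part of the first
column lying below the second row. -/
structure HookT where
  r1 : List ℕ
  r2 : List ℕ
  col : List ℕ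
deriving DecidableEq

/-- `T` is an increasing gapless tableau of shape `(l1,l2)` with maximum entry `m`. -/
def IsIGLT (l1 l2 m : ℕ) (T : TwoRowT) : Prop :=
  T.r1.length = l1 ∧ T.r2.length = l2 ∧
  T.r1.Chain' (· < ·) ∧ T.r2.Chain' (· < ·) ∧
  (∀ j, j < l2 → T.r1.getD j 0 < T.r2.getD j 0) ∧
  (∀ x ∈ T.r1, 1 ≤ x ∧ x ≤ m) ∧ (∀ x ∈ T.r2, 1 ≤ x ∧ x ≤ m) ∧
  (∀ k, 1 ≤ k → k ≤ m → k ∈ T.r1 ∨ k ∈ T.r2) ∧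
  (m ∈ T.r1 ∨ m ∈ T.r2)

/-- The set `A` of repeated entries of a two-row increasing tableau. -/
def setA (T : TwoRowT) : List ℕ := T.r1.filter (fun x => x ∈ T.r2)

/-- The set `B`: entries of the second row immediately to the right of an element of `A`. -/
def setB (T : TwoRowT) : List ℕ :=
  (T.r2.zip T.r2.tail).filterMap (fun p => if p.1 ∈ setA T then some p.2 else none)

/-- Pechenik's map `Φ_{λ;m}`. -/
def Phi (T : TwoRowT) : HookT :=
  ⟨T.r1.filter (fun x => x ∉ setA T),
   T.r2.filter (fun x => x ∉ setB T),
   List.insertionSort (· ≤ ·) (setB T)⟩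

/-- The shape of a hook-plus tableau, as a list. -/
def shapeOf (S : HookT) : List ℕ :=
  S.r1.length :: S.r2.length :: List.replicate S.col.length 1

/-- `S` is a standard Young tableau with entries `1,...,m`. -/
def IsSYTHook (m : ℕ) (S : HookT) : Prop :=
  S.r1.Chain' (· < ·) ∧ S.r2.Chain' (· < ·) ∧
  ((S.r1.take 1) ++ (S.r2.take 1) ++ S.col).Chain' (· < ·) ∧
  (∀ j, j < S.r2.length → S.r1.getD j 0 < S.r2.getD j 0) ∧
  S.r2.length ≤ S.r1.length ∧
  (S.col ≠ [] → S.r2 ≠ []) ∧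
  (S.r1 ++ S.r2 ++ S.col).Perm (List.range' 1 m)

/-- The shape `λ_m^{(1)} = (λ₁-k, λ₂-k, 1^k)`. -/
def lamShape1 (l1 l2 k : ℕ) : List ℕ := [l1 - k, l2 - k] ++ List.replicate k 1

/-- The shape `λ_m^{(2)} = (λ₁-k, λ₂-k+1, 1^(k-1))`. -/
def lamShape2 (l1 l2 k : ℕ) : List ℕ := [l1 - k, l2 - k + 1] ++ List.replicate (k - 1) 1

/-- The set `Par(λ;m)` of shapes occurring in Pechenik's expansion. -/
def ParSet (l1 l2 n m : ℕ) : Set (List ℕ) :=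
  {s | (n - m + 1 < l2 ∨ m = n) ∧ s = lamShape1 l1 l2 (n - m)} ∪
  {s | l1 ≠ l2 ∧ m < n ∧ n - m < l2 ∧ s = lamShape2 l1 l2 (n - m)}

/-- Row index (1-based) of the entry `x` in a hook-plus tableau. -/
def rowIdx (S : HookT) (x : ℕ) : ℕ :=
  if x ∈ S.r1 then 1 else if x ∈ S.r2 then 2 else 3 + S.col.idxOf x

/-- Column index (0-based) of the entry `x` in a hook-plus tableau. -/
def colIdx (S : HookT) (x : ℕ) : ℕ :=
  if x ∈ S.r1 then S.r1.idxOf x else if x ∈ S.r2 then S.r2.idxOf x else 0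

/-- Descent set of an increasing gapless two-row tableau with max entry `m`. -/
def desT (m : ℕ) (T : TwoRowT) : Finset ℕ :=
  (Finset.Ioo 0 m).filter (fun i => i ∈ T.r1 ∧ i + 1 ∈ T.r2)

/-- Descent set of a standard Young tableau with entries `1,...,m`. -/
def desS (m : ℕ) (S : HookT) : Finset ℕ :=
  (Finset.Ioo 0 m).filter (fun i => rowIdx S i < rowIdx S (i + 1))

def swapVal (i j x : ℕ) : ℕ := if x = i then j else if x = j then i else x

/-- Swap the entries `i` and `j` in a two-row tableau. -/
def twoRowSwap (i j : ℕ) (T : TwoRowT) : TwoRowT :=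
  ⟨T.r1.map (swapVal i j), T.r2.map (swapVal i j)⟩

/-- Swap the entries `i` and `j` in a hook-plus tableau. -/
def hookSwap (i j : ℕ) (S : HookT) : HookT :=
  ⟨S.r1.map (swapVal i j), S.r2.map (swapVal i j), S.col.map (swapVal i j)⟩

/-- Searles' 0-Hecke operator `π_i` on a standard Young tableau:
`some S` means the result is `S`, `none` means the result is `0`. -/
def searlesStep (i : ℕ) (S : HookT) : Option HookT :=
  if colIdx S i < colIdx S (i + 1) then some S
  else if colIdx S i = colIdx S (i + 1) then none
  else some (hookSwap i (i + 1) S)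

/-- Kim–Yoo's 0-Hecke operator `π_i` on an increasing gapless tableau. -/
def kyStep (i : ℕ) (T : TwoRowT) : Option TwoRowT :=
  if i ∈ T.r1 ∧ i + 1 ∈ T.r2 then
    if i ∉ T.r2 ∧ i + 1 ∉ T.r1 ∧ T.r2.idxOf (i + 1) < T.r1.idxOf i then
      some (twoRowSwap i (i + 1) T)
    else none
  else some T

/-- Searles' operator, extended linearly. -/
noncomputable def piOp (i : ℕ) : (HookT →₀ ℂ) →ₗ[ℂ] (HookT →₀ ℂ) :=
  Finsupp.lsum ℂ fun S => (searlesStep i S).elim 0 fun S' => Finsupp.lsingle S'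

/-- Kim–Yoo's operator, extended linearly. -/
noncomputable def kyOp (i : ℕ) : (TwoRowT →₀ ℂ) →ₗ[ℂ] (TwoRowT →₀ ℂ) :=
  Finsupp.lsum ℂ fun T => (kyStep i T).elim 0 fun T' => Finsupp.lsingle T'

/-- The data of the boxes occupied by repeated entries: for each repeated entry `i`,
the pair of (0-based) columns of its occurrence in row 1 and in row 2.
For two-row shapes this datum determines the pair `(Γ_i(T), T⁻¹(i))`. -/
def repPairs (T : TwoRowT) : Set (ℕ × ℕ) :=
  {p | ∃ i, i ∈ T.r1 ∧ i ∈ T.r2 ∧ p = (T.r1.idxOf i, T.r2.idxOf i)}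

/-- The Kim–Yoo equivalence `∼_{λ;m}` on two-row increasing gapless tableaux. -/
def equivKY (T1 T2 : TwoRowT) : Prop := repPairs T1 = repPairs T2

/-- The equivalence class of `T` in `IGLT(λ)_m` under `∼_{λ;m}`. -/
def classOf (l1 l2 m : ℕ) (T : TwoRowT) : Set TwoRowT :=
  {T' | IsIGLT l1 l2 m T' ∧ equivKY T T'}

/-- The columns (0-based) of the bottommost boxes of the repeated entries,
listed in increasing order of the repeated entries. -/
def botCols (T : TwoRowT) : List ℕ :=
  (T.r1.filter (fun x => x ∈ T.r2)).map (fun i => T.r2.idxOf i)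

/-- The partial order `⪯` on equivalence classes. -/
def classLE (C1 C2 : Set TwoRowT) : Prop :=
  ∃ T1 ∈ C1, ∃ T2 ∈ C2, List.Forall₂ (· ≤ ·) (botCols T1) (botCols T2)

open Classical in
/-- The fundamental quasisymmetric function `F_{comp(D)}` of degree `m`,
as a formal power series in the variables `x_0, x_1, x_2, ...`. -/
noncomputable def Fqs (m : ℕ) (D : Finset ℕ) : MvPowerSeries ℕ ℚ :=
  fun e =>
    if ∃ f : Fin m → ℕ, Monotone f ∧
        (∀ j : ℕ, ∀ hj : j < m, 0 < j → j ∈ D → f ⟨j - 1, by omega⟩ < f ⟨j, hj⟩) ∧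
        (∀ i : ℕ, e i = Nat.card {j : Fin m // f j = i})
    then 1 else 0

/-- The Schur function `s_μ = Σ_{S ∈ SYT(μ)} F_{comp(Des(S))}` (for shapes
representable as hook-plus tableaux). -/
noncomputable def schurF (m : ℕ) (μ : List ℕ) : MvPowerSeries ℕ ℚ :=
  ∑ᶠ S ∈ {S : HookT | IsSYTHook m S ∧ shapeOf S = μ}, Fqs m (desS m S)


section Aux
open List

lemma myNodup {l : List ℕ} (h : l.Chain' (· < ·)) : l.Nodup :=
  (List.isChain_iff_pairwise.mp h).nodup

lemma myMemTake {l : List ℕ} (hn : l.Nodup) {k x : ℕ} :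
    x ∈ l.take k ↔ x ∈ l ∧ l.idxOf x < k := by
  constructor
  · intro hx
    obtain ⟨j, hj, hg⟩ := List.mem_iff_getElem.mp hx
    have hj' : j < l.length := lt_of_lt_of_le hj (by simp [List.length_take])
    have hjk : j < k := lt_of_lt_of_le hj (by simp [List.length_take])
    have : (l.take k)[j] = l[j] := List.getElem_take
    refine ⟨?_, ?_⟩
    · rw [← hg, this]; exact List.getElem_mem hj'
    · rw [← hg, this, hn.idxOf_getElem j hj']; exact hjk
  · rintro ⟨hx, hk⟩
    have hlt : l.idxOf x < l.length := List.idxOf_lt_length_iff.mpr hx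
    have hlt' : l.idxOf x < (l.take k).length := by
      simp [List.length_take]; omega
    have : (l.take k)[l.idxOf x] = l[l.idxOf x] := List.getElem_take
    have hg : (l.take k)[l.idxOf x] = x := by rw [this, List.getElem_idxOf hlt]
    exact hg ▸ List.getElem_mem hlt'

lemma myFilterLen (p : ℕ → Bool) : ∀ l : List ℕ,
    (l.filter (fun x => !p x)).length = l.length - (l.filter p).length
  | [] => rfl
  | a :: l => by
      have hle : (l.filter p).length ≤ l.length := List.length_filter_le p l
      by_cases h : p a <;> simp [List.filter_cons, h, myFilterLen p l] <;> omega

lemma myZipFst : ∀ (l : List ℕ), (l.zip l.tail).map Prod.fst = l.dropLast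
  | [] => rfl
  | [a] => rfl
  | a :: b :: l => by
      have ih := myZipFst (b :: l)
      simp only [List.tail_cons] at ih ⊢
      rw [List.zip_cons_cons, List.map_cons, ih, List.dropLast_cons₂]

lemma myZipFM (P : ℕ × ℕ → Prop) [DecidablePred P] (L : List (ℕ × ℕ)) :
    L.filterMap (fun q => if P q then some q.2 else none)
      = (L.filter (fun q => decide (P q))).map Prod.snd := by
  induction L with
  | nil => rfl
  | cons a L ih => by_cases h : P a <;> simp [List.filter_cons, h, ih]

lemma myLenEq {l : List ℕ} (h : l.Nodup) {f : ℕ → ℕ × ℕ}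
    (hf : Set.InjOn f {x | x ∈ l}) : (f '' {x | x ∈ l}).ncard = l.length := by
  rw [Set.ncard_image_of_injOn hf, ← List.coe_toFinset, Set.ncard_coe_finset,
    List.toFinset_card_of_nodup h]

lemma setA_sub_r1 {T : TwoRowT} : ∀ x ∈ setA T, x ∈ T.r1 ∧ x ∈ T.r2 := by
  intro x hx
  simpa [setA] using List.mem_filter.mp hx

lemma repPairs_eq (T : TwoRowT) :
    repPairs T = (fun i => (T.r1.idxOf i, T.r2.idxOf i)) '' {i | i ∈ setA T} := by
  ext p
  simp only [repPairs, Set.mem_setOf_eq, Set.mem_image, setA, List.mem_filter,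
    decide_eq_true_eq]
  constructor
  · rintro ⟨i, h1, h2, rfl⟩; exact ⟨i, ⟨h1, h2⟩, rfl⟩
  · rintro ⟨i, ⟨h1, h2⟩, rfl⟩; exact ⟨i, h1, h2, rfl⟩

lemma injOn_pair {T : TwoRowT} {s : Set ℕ} (hs : ∀ x ∈ s, x ∈ T.r1) :
    Set.InjOn (fun i => (T.r1.idxOf i, T.r2.idxOf i)) s := by
  intro a ha b hb hab
  have h1 : T.r1.idxOf a = T.r1.idxOf b := congrArg Prod.fst hab
  exact (List.idxOf_inj (hs a ha)).mp h1

lemma lenA_eq (T : TwoRowT) (h1 : T.r1.Nodup) :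
    (setA T).length = (repPairs T).ncard := by
  rw [repPairs_eq]
  exact (myLenEq (h1.filter _) (injOn_pair fun x hx => (setA_sub_r1 x hx).1)).symm

lemma setB_eq (T : TwoRowT) :
    setB T = ((T.r2.zip T.r2.tail).filter
      (fun q => decide (q.1 ∈ setA T))).map Prod.snd :=
  myZipFM _ _

lemma setB_sublist (T : TwoRowT) : (setB T).Sublist T.r2 := by
  rw [setB_eq]
  have h : T.r2.tail.length ≤ T.r2.length := by cases T.r2 <;> simp
  refine List.Sublist.trans (List.Sublist.map Prod.snd List.filter_sublist) ?_
  rw [List.map_snd_zip h]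
  exact List.tail_sublist _

lemma lenB_eq (T : TwoRowT) (h1 : T.r1.Nodup) (h2 : T.r2.Nodup) (hl : 1 ≤ T.r2.length) :
    (setB T).length = {p ∈ repPairs T | p.2 + 1 < T.r2.length}.ncard := by
  classical
  -- step 1: length of setB = length of filtered dropLast
  have step1 : (setB T).length
      = ((T.r2.dropLast).filter (fun x => decide (x ∈ setA T))).length := by
    rw [setB_eq, List.length_map]
    have hfst : (T.r2.zip T.r2.tail).map Prod.fst = T.r2.dropLast := myZipFst _
    calc ((T.r2.zip T.r2.tail).filter (fun q => decide (q.1 ∈ setA T))).length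
        = (((T.r2.zip T.r2.tail).map Prod.fst).filter
            (fun x => decide (x ∈ setA T))).length := by
          rw [← List.countP_eq_length_filter, ← List.countP_eq_length_filter,
            List.countP_map]
          rfl
      _ = _ := by rw [hfst]
  rw [step1]
  -- step 2: set identification
  have hset : {x | x ∈ (T.r2.dropLast).filter (fun x => decide (x ∈ setA T))}
      = {i | i ∈ setA T ∧ T.r2.idxOf i + 1 < T.r2.length} := by
    ext x
    simp only [Set.mem_setOf_eq, List.mem_filter, decide_eq_true_eq]
    rw [List.dropLast_eq_take, myMemTake h2]
    constructor
    · rintro ⟨⟨hx2, hidx⟩, hxA⟩; exact ⟨hxA, by omega⟩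
    · rintro ⟨hxA, hidx⟩
      exact ⟨⟨(setA_sub_r1 x hxA).2, by omega⟩, hxA⟩
  have himg : {p ∈ repPairs T | p.2 + 1 < T.r2.length}
      = (fun i => (T.r1.idxOf i, T.r2.idxOf i)) ''
          {i | i ∈ setA T ∧ T.r2.idxOf i + 1 < T.r2.length} := by
    rw [repPairs_eq]
    ext p
    simp only [Set.mem_setOf_eq, Set.mem_image]
    constructor
    · rintro ⟨⟨i, hi, rfl⟩, hlt⟩; exact ⟨i, ⟨hi, hlt⟩, rfl⟩
    · rintro ⟨i, ⟨hi, hlt⟩, rfl⟩; exact ⟨⟨i, hi, rfl⟩, hlt⟩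
  rw [himg, ← hset]
  have hnd : ((T.r2.dropLast).filter (fun x => decide (x ∈ setA T))).Nodup :=
    ((List.dropLast_sublist _).nodup h2).filter _
  refine (myLenEq hnd (injOn_pair ?_)).symm
  intro x hx
  have := (List.mem_filter.mp hx).2
  exact (setA_sub_r1 x (by simpa using this)).1

lemma phi_r1_len (T : TwoRowT) :
    (Phi T).r1.length = T.r1.length - (T.r1.filter (fun x => decide (x ∈ setA T))).length := by
  have hd : (fun x => decide (x ∉ setA T)) = (fun x => !(decide (x ∈ setA T))) := by
    funext x; simp [decide_not]
  show (T.r1.filter (fun x => decide (x ∉ setA T))).length = _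
  rw [hd]
  exact myFilterLen _ _

lemma filterA (T : TwoRowT) :
    T.r1.filter (fun x => decide (x ∈ setA T)) = setA T := by
  apply List.filter_congr
  intro x hx
  simp only [setA, List.mem_filter, decide_eq_true_eq, decide_eq_decide]
  tauto

lemma filterB_len (T : TwoRowT) (h2 : T.r2.Nodup) :
    (T.r2.filter (fun x => decide (x ∈ setB T))).length = (setB T).length := by
  have hBnd : (setB T).Nodup := (setB_sublist T).nodup h2
  have hnd : (T.r2.filter (fun x => decide (x ∈ setB T))).Nodup := h2.filter _
  rw [← List.toFinset_card_of_nodup hnd, ← List.toFinset_card_of_nodup hBnd]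
  congr 1
  ext x
  simp only [List.mem_toFinset, List.mem_filter, decide_eq_true_eq]
  exact ⟨fun h => h.2, fun h => ⟨(setB_sublist T).mem h, h⟩⟩

lemma phi_r2_len (T : TwoRowT) (h2 : T.r2.Nodup) :
    (Phi T).r2.length = T.r2.length - (setB T).length := by
  have hd : (fun x => decide (x ∉ setB T)) = (fun x => !(decide (x ∈ setB T))) := by
    funext x; simp [decide_not]
  show (T.r2.filter (fun x => decide (x ∉ setB T))).length = _
  rw [hd, myFilterLen, filterB_len T h2]

lemma phi_col_len (T : TwoRowT) : (Phi T).col.length = (setB T).length :=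
  (List.perm_insertionSort _ _).length_eq

end Aux

/-- If `T₁ ∼_{λ;m} T₂` are equivalent increasing gapless tableaux of a two-row shape
`λ` with maximum entry `m`, then `Φ_{λ;m}(T₁)` and `Φ_{λ;m}(T₂)` have the same shape. -/
theorem stmt_7 (l1 l2 n m : ℕ) (h2 : 1 ≤ l2) (h12 : l2 ≤ l1) (hn : n = l1 + l2)
    (hm1 : max l1 (l2 + 1) ≤ m) (hm2 : m ≤ n)
    (T1 T2 : TwoRowT) (hT1 : IsIGLT l1 l2 m T1) (hT2 : IsIGLT l1 l2 m T2)
    (heq : equivKY T1 T2) :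
    shapeOf (Phi T1) = shapeOf (Phi T2) := by
  obtain ⟨hl1a, hl2a, hc1a, hc2a, -, -, -, -, -⟩ := hT1
  obtain ⟨hl1b, hl2b, hc1b, hc2b, -, -, -, -, -⟩ := hT2
  have hn1a := myNodup hc1a
  have hn2a := myNodup hc2a
  have hn1b := myNodup hc1b
  have hn2b := myNodup hc2b
  have hA : (setA T1).length = (setA T2).length := by
    rw [lenA_eq T1 hn1a, lenA_eq T2 hn1b, heq]
  have hB : (setB T1).length = (setB T2).length := by
    rw [lenB_eq T1 hn1a hn2a (by omega), lenB_eq T2 hn1b hn2b (by omega), heq,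
      hl2a, hl2b]
  have e1 : (Phi T1).r1.length = (Phi T2).r1.length := by
    rw [phi_r1_len, phi_r1_len, filterA, filterA, hl1a, hl1b, hA]
  have e2 : (Phi T1).r2.length = (Phi T2).r2.length := by
    rw [phi_r2_len T1 hn2a, phi_r2_len T2 hn2b, hl2a, hl2b, hB]
  have e3 : (Phi T1).col.length = (Phi T2).col.length := by
    rw [phi_col_len, phi_col_len, hB]
  simp [shapeOf, e1, e2, e3]
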